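/- Let n ≥ 1 and 0 < k < n, and let q, v ∈ ℂ with 0 < |q| < 1 and |v| = 1. Then X(vq^k,qⁿ) = Σ_{l≥1} l v^l q^{kl} + Σ_{m≥1} Σ_{l≥1} ( l v^l q^{(mn+k)l} + l v^{−l} q^{(mn−k)l} − 2 l q^{mnl} ) and Y(vq^k,qⁿ) = Σ_{l≥2} ((l−1)l/2) v^l q^{kl} + Σ_{m≥1} Σ_{l≥1} ( ((l−1)l/2) v^l q^{(mn+k)l} − (l(l+1)/2) v^{−l} q^{(mn−k)l} + l q^{mnl} ), all series converging absolutely. -/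

import Mathlib

/-!
For `‖x‖ < 1` we have `x/(1-x)² = Σ_{l≥1} l xˡ` and `x²/(1-x)³ = Σ_{l≥2} (l choose 2) xˡ`.
In `Σ_{m∈ℤ}` the point `u = v qᵏ` is multiplied by `qⁿᵐ`: for `m ≥ 0` it has modulus `< 1` and
expands directly, while for `m = -(a+1)` it is the inverse of `v⁻¹ q^((a+1)n-k)`, of modulus `< 1`
because `k < n`, and `x⁻¹/(1-x⁻¹)² = x/(1-x)²`, `x⁻²/(1-x⁻¹)³ = -x/(1-x)³` turn it into an
expansion in that point. Every double series is dominated by `Σ (l+1)ʲ ‖q‖^((m+1)(l+1))`, so it may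
be summed fibre by fibre in `m`; finally `s₁(Q) = Σ_{m,l≥1} l Q^(ml)` is the Lambert series.
-/

/-- `s₁(Q) = Σ_{m≥1} σ₁(m) Qᵐ`. -/
noncomputable def s1ser (Q : ℂ) : ℂ :=
  ∑' m : ℕ, (∑ d ∈ Nat.divisors (m + 1), (d : ℂ)) * Q ^ (m + 1)

/-- `X(u,Q) = Σ_{m∈ℤ} Qᵐu/(1−Qᵐu)² − 2s₁(Q)`. -/
noncomputable def Xtate (u Q : ℂ) : ℂ :=
  (∑' m : ℤ, Q ^ m * u / (1 - Q ^ m * u) ^ 2) - 2 * s1ser Q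

/-- `Y(u,Q) = Σ_{m∈ℤ} (Qᵐu)²/(1−Qᵐu)³ + s₁(Q)`. -/
noncomputable def Ytate (u Q : ℂ) : ℂ :=
  (∑' m : ℤ, (Q ^ m * u) ^ 2 / (1 - Q ^ m * u) ^ 3) + s1ser Q

section PowerSeries

variable {𝕜 : Type*} [NormedField 𝕜] {x : 𝕜}

theorem hasSum_succ_mul_pow_succ (hx : ‖x‖ < 1) :
    HasSum (fun l : ℕ => ((l + 1 : ℕ) : 𝕜) * x ^ (l + 1)) (x / (1 - x) ^ 2) := by
  simpa using (hasSum_nat_add_iff' (f := fun l : ℕ => (l : 𝕜) * x ^ l) 1).2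
    (hasSum_coe_mul_geometric_of_norm_lt_one hx)

theorem hasSum_choose_two_mul_pow_add_two (hx : ‖x‖ < 1) :
    HasSum (fun l : ℕ => ((l + 2).choose 2 : 𝕜) * x ^ (l + 2)) (x ^ 2 / (1 - x) ^ 3) := by
  have h := (hasSum_choose_mul_geometric_of_norm_lt_one 2 hx).mul_left (x ^ 2)
  rw [mul_one_div] at h
  exact h.congr_fun fun l => by ring

theorem hasSum_choose_two_mul_pow_succ (hx : ‖x‖ < 1) :
    HasSum (fun l : ℕ => ((l + 1).choose 2 : 𝕜) * x ^ (l + 1)) (x ^ 2 / (1 - x) ^ 3) := by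
  refine (hasSum_nat_add_iff' 1).1 ?_
  simpa using hasSum_choose_two_mul_pow_add_two hx

theorem hasSum_choose_two_add_two_mul_pow_succ (hx : ‖x‖ < 1) :
    HasSum (fun l : ℕ => ((l + 2).choose 2 : 𝕜) * x ^ (l + 1)) (x / (1 - x) ^ 3) := by
  have h := (hasSum_choose_mul_geometric_of_norm_lt_one 2 hx).mul_left x
  rw [mul_one_div] at h
  exact h.congr_fun fun l => by ring

theorem norm_mul_pow_le {v q : 𝕜} (hv : ‖v‖ = 1) (hq : ‖q‖ ≤ 1) {d e : ℕ} (h : d ≤ e) :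
    ‖v * q ^ e‖ ≤ ‖q‖ ^ d := by
  rw [norm_mul, hv, one_mul, norm_pow]
  exact pow_le_pow_of_le_one (norm_nonneg _) hq h

variable [CompleteSpace 𝕜]

theorem summable_prod_mul_pow_succ {c : ℕ → ℕ} {y : ℕ → 𝕜} {r : ℝ} (j : ℕ)
    (hc : ∀ l, c l ≤ (l + 1) ^ j) (hr : r < 1) (hy : ∀ m, ‖y m‖ ≤ r ^ (m + 1)) :
    Summable (fun p : ℕ × ℕ => (c p.2 : 𝕜) * y p.1 ^ (p.2 + 1)) := by
  have hr0 : 0 ≤ r := by simpa using (norm_nonneg _).trans (hy 0)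
  have hgeom : Summable (fun m : ℕ => r ^ m) := summable_geometric_of_lt_one hr0 hr
  have hpoly : Summable (fun l : ℕ => ((l + 1 : ℕ) : ℝ) ^ j * r ^ (l + 1)) :=
    (summable_nat_add_iff (f := fun l : ℕ => (l : ℝ) ^ j * r ^ l) 1).2
      (summable_pow_mul_geometric_of_norm_lt_one j (by rwa [Real.norm_of_nonneg hr0]))
  refine (hgeom.mul_of_nonneg hpoly (fun _ => by positivity) fun _ => by positivity)
    |>.of_norm_bounded fun p => ?_
  have hexp : p.1 + (p.2 + 1) ≤ (p.1 + 1) * (p.2 + 1) := by nlinarith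
  calc ‖(c p.2 : 𝕜) * y p.1 ^ (p.2 + 1)‖ ≤ (c p.2 : ℝ) * ‖y p.1‖ ^ (p.2 + 1) := by
        rw [norm_mul, norm_pow]
        gcongr
        simpa using Nat.norm_cast_le (α := 𝕜) (c p.2)
    _ ≤ ((p.2 + 1 : ℕ) : ℝ) ^ j * (r ^ (p.1 + 1)) ^ (p.2 + 1) := by
        gcongr
        · exact_mod_cast hc p.2
        · exact hy p.1
    _ ≤ ((p.2 + 1 : ℕ) : ℝ) ^ j * r ^ (p.1 + (p.2 + 1)) := by
        rw [← pow_mul]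
        exact mul_le_mul_of_nonneg_left (pow_le_pow_of_le_one hr0 hr.le hexp) (by positivity)
    _ = r ^ p.1 * (((p.2 + 1 : ℕ) : ℝ) ^ j * r ^ (p.2 + 1)) := by ring

theorem hasSum_fiberwise_prod_mul_pow_succ {c : ℕ → ℕ} {y : ℕ → 𝕜} {F : 𝕜 → 𝕜} {r : ℝ}
    (j : ℕ) (hc : ∀ l, c l ≤ (l + 1) ^ j)
    (hF : ∀ x : 𝕜, ‖x‖ < 1 → HasSum (fun l : ℕ => (c l : 𝕜) * x ^ (l + 1)) (F x))
    (hr : r < 1) (hy : ∀ m, ‖y m‖ ≤ r ^ (m + 1)) :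
    HasSum (fun m => F (y m)) (∑' p : ℕ × ℕ, (c p.2 : 𝕜) * y p.1 ^ (p.2 + 1)) := by
  have hr0 : 0 ≤ r := by simpa using (norm_nonneg _).trans (hy 0)
  exact (summable_prod_mul_pow_succ j hc hr hy).hasSum.prod_fiberwise fun m =>
    hF _ ((hy m).trans_lt (pow_lt_one₀ hr0 hr m.succ_ne_zero))

end PowerSeries

theorem choose_two_add_two_le_sq (l : ℕ) : (l + 2).choose 2 ≤ (l + 1) ^ 2 := by
  rw [Nat.choose_two_right, show l + 2 - 1 = l + 1 from rfl]
  exact Nat.div_le_of_le_mul (by nlinarith)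

section Inversion

variable {K : Type*} [Field K]

theorem inv_div_one_sub_inv_sq (y : K) : y⁻¹ / (1 - y⁻¹) ^ 2 = y / (1 - y) ^ 2 := by
  rcases eq_or_ne y 0 with rfl | h0
  · simp
  rcases eq_or_ne y 1 with rfl | h1
  · simp
  have : 1 - y ≠ 0 := sub_ne_zero.2 h1.symm
  field_simp
  ring

theorem inv_sq_div_one_sub_inv_cube (y : K) : y⁻¹ ^ 2 / (1 - y⁻¹) ^ 3 = -(y / (1 - y) ^ 3) := by
  rcases eq_or_ne y 0 with rfl | h0
  · simp
  rcases eq_or_ne y 1 with rfl | h1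
  · simp
  have : 1 - y ≠ 0 := sub_ne_zero.2 h1.symm
  field_simp
  ring

end Inversion

open ArithmeticFunction in
theorem hasSum_s1ser {Q : ℂ} (hQ : ‖Q‖ < 1) :
    HasSum (fun p : ℕ × ℕ => ((p.2 + 1 : ℕ) : ℂ) * Q ^ ((p.1 + 1) * (p.2 + 1))) (s1ser Q) := by
  let e : ℕ × ℕ ≃ ℕ+ × ℕ+ := Equiv.pnatEquivNat.symm.prodCongr Equiv.pnatEquivNat.symm
  have hsum := summable_prod_mul_pow 1 hQ
  have hg := hsum.hasSum
  rw [hsum.tsum_prod, tsum_prod_pow_eq_tsum_sigma 1 hQ,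
    tsum_pnat_eq_tsum_succ (f := fun m => (sigma 1 m : ℂ) * Q ^ m)] at hg
  have hs : s1ser Q = ∑' m : ℕ, (sigma 1 (m + 1) : ℂ) * Q ^ (m + 1) := by
    simp [s1ser, sigma_one_apply]
  rw [hs]
  exact (e.hasSum_iff.2 hg).congr_fun fun p => by simp [e]

section TateSeries

variable {n k : ℕ} {q v : ℂ}

theorem zpow_natCast_add_one_mul (a : ℕ) :
    (q ^ n) ^ ((a : ℤ) + 1) * (v * q ^ k) = v * q ^ ((a + 1) * n + k) := by
  rw [← Nat.cast_add_one, zpow_natCast, ← pow_mul, pow_add, mul_comm n]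
  ring

theorem zpow_neg_natCast_add_one_mul (hk0 : 0 < k) (hkn : k < n) (a : ℕ) :
    (q ^ n) ^ (-((a : ℤ) + 1)) * (v * q ^ k) = (v⁻¹ * q ^ ((a + 1) * n - k))⁻¹ := by
  have hn : n ≤ (a + 1) * n := Nat.le_mul_of_pos_left n a.succ_pos
  have hsplit : (a + 1) * n = ((a + 1) * n - k) + k := by omega
  rcases eq_or_ne q 0 with rfl | hq
  · have : (a + 1) * n - k ≠ 0 := by omega
    simp [hk0.ne', this]
  rw [zpow_neg, ← Nat.cast_add_one, zpow_natCast, ← pow_mul, mul_comm n, hsplit, pow_add]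
  simp only [Nat.add_sub_cancel]
  field_simp

theorem norm_mul_pow_add_le (hn : 0 < n) (hq : ‖q‖ < 1) (hv : ‖v‖ = 1) (a : ℕ) :
    ‖v * q ^ ((a + 1) * n + k)‖ ≤ ‖q‖ ^ (a + 1) :=
  norm_mul_pow_le hv hq.le (by nlinarith)

theorem norm_inv_mul_pow_sub_le (hkn : k < n) (hq : ‖q‖ < 1) (hv : ‖v‖ = 1) (a : ℕ) :
    ‖v⁻¹ * q ^ ((a + 1) * n - k)‖ ≤ ‖q‖ ^ (a + 1) :=
  norm_mul_pow_le (by simp [hv]) hq.le (Nat.le_sub_of_add_le (by nlinarith))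

theorem hasSum_Xtate_term_zero (hk0 : 0 < k) (hq : ‖q‖ < 1) (hv : ‖v‖ = 1) :
    HasSum (fun l : ℕ => ((l + 1 : ℕ) : ℂ) * v ^ (l + 1) * q ^ (k * (l + 1)))
      (v * q ^ k / (1 - v * q ^ k) ^ 2) := by
  have hu : ‖v * q ^ k‖ < 1 := (norm_mul_pow_le hv hq.le hk0).trans_lt (by simpa using hq)
  exact (hasSum_succ_mul_pow_succ hu).congr_fun fun l => by rw [mul_pow, ← pow_mul, mul_assoc]

theorem hasSum_Ytate_term_zero (hk0 : 0 < k) (hq : ‖q‖ < 1) (hv : ‖v‖ = 1) :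
    HasSum (fun l : ℕ =>
        (((l + 2 : ℕ) : ℂ) - 1) * ((l + 2 : ℕ) : ℂ) / 2 * v ^ (l + 2) * q ^ (k * (l + 2)))
      ((v * q ^ k) ^ 2 / (1 - v * q ^ k) ^ 3) := by
  have hu : ‖v * q ^ k‖ < 1 := (norm_mul_pow_le hv hq.le hk0).trans_lt (by simpa using hq)
  refine (hasSum_choose_two_mul_pow_add_two hu).congr_fun fun l => ?_
  rw [Nat.cast_choose_two, mul_pow, ← pow_mul]
  ring

theorem Xtate_tsum_expansion (hk0 : 0 < k) (hkn : k < n) (hq : ‖q‖ < 1) (hv : ‖v‖ = 1) :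
    Summable (fun p : ℕ × ℕ =>
      ((p.2 + 1 : ℕ) : ℂ) * v ^ (p.2 + 1) * q ^ (((p.1 + 1) * n + k) * (p.2 + 1))) ∧
    Summable (fun p : ℕ × ℕ =>
      ((p.2 + 1 : ℕ) : ℂ) * v ^ (-((p.2 + 1 : ℕ) : ℤ)) * q ^ (((p.1 + 1) * n - k) * (p.2 + 1))) ∧
    HasSum (fun m : ℤ => (q ^ n) ^ m * (v * q ^ k) / (1 - (q ^ n) ^ m * (v * q ^ k)) ^ 2)
      ((∑' p : ℕ × ℕ,
          ((p.2 + 1 : ℕ) : ℂ) * v ^ (p.2 + 1) * q ^ (((p.1 + 1) * n + k) * (p.2 + 1)))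
        + v * q ^ k / (1 - v * q ^ k) ^ 2
        + ∑' p : ℕ × ℕ, ((p.2 + 1 : ℕ) : ℂ) * v ^ (-((p.2 + 1 : ℕ) : ℤ))
            * q ^ (((p.1 + 1) * n - k) * (p.2 + 1))) := by
  have hn : 0 < n := hk0.trans hkn
  have hc : ∀ l : ℕ, l + 1 ≤ (l + 1) ^ 1 := fun l => (pow_one _).ge
  have hpos : (fun p : ℕ × ℕ =>
      ((p.2 + 1 : ℕ) : ℂ) * v ^ (p.2 + 1) * q ^ (((p.1 + 1) * n + k) * (p.2 + 1))) =
      fun p => ((p.2 + 1 : ℕ) : ℂ) * (v * q ^ ((p.1 + 1) * n + k)) ^ (p.2 + 1) := by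
    funext p; rw [mul_pow, ← pow_mul, mul_assoc]
  have hneg : (fun p : ℕ × ℕ =>
      ((p.2 + 1 : ℕ) : ℂ) * v ^ (-((p.2 + 1 : ℕ) : ℤ)) * q ^ (((p.1 + 1) * n - k) * (p.2 + 1))) =
      fun p => ((p.2 + 1 : ℕ) : ℂ) * (v⁻¹ * q ^ ((p.1 + 1) * n - k)) ^ (p.2 + 1) := by
    funext p; rw [mul_pow, ← pow_mul, mul_assoc, zpow_neg, zpow_natCast, inv_pow]
  rw [hpos, hneg]
  -- `(e :)` elaborates `e` before unifying, so that `y` is read off the norm bound.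
  refine ⟨(summable_prod_mul_pow_succ 1 hc hq (norm_mul_pow_add_le hn hq hv) :),
    (summable_prod_mul_pow_succ 1 hc hq (norm_inv_mul_pow_sub_le hkn hq hv) :), ?_⟩
  have h := HasSum.of_add_one_of_neg_add_one
    (f := fun m : ℤ => (q ^ n) ^ m * (v * q ^ k) / (1 - (q ^ n) ^ m * (v * q ^ k)) ^ 2)
    (by
      simp only [zpow_natCast_add_one_mul]
      exact (hasSum_fiberwise_prod_mul_pow_succ 1 hc (fun _ => hasSum_succ_mul_pow_succ) hq
        (norm_mul_pow_add_le hn hq hv) :))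
    (by
      simp only [zpow_neg_natCast_add_one_mul hk0 hkn, inv_div_one_sub_inv_sq]
      exact (hasSum_fiberwise_prod_mul_pow_succ 1 hc (fun _ => hasSum_succ_mul_pow_succ) hq
        (norm_inv_mul_pow_sub_le hkn hq hv) :))
  simpa using h

theorem Ytate_tsum_expansion (hk0 : 0 < k) (hkn : k < n) (hq : ‖q‖ < 1) (hv : ‖v‖ = 1) :
    Summable (fun p : ℕ × ℕ =>
      (((p.2 + 1 : ℕ) : ℂ) - 1) * ((p.2 + 1 : ℕ) : ℂ) / 2 * v ^ (p.2 + 1)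
        * q ^ (((p.1 + 1) * n + k) * (p.2 + 1))) ∧
    Summable (fun p : ℕ × ℕ =>
      ((p.2 + 1 : ℕ) : ℂ) * (((p.2 + 1 : ℕ) : ℂ) + 1) / 2 * v ^ (-((p.2 + 1 : ℕ) : ℤ))
        * q ^ (((p.1 + 1) * n - k) * (p.2 + 1))) ∧
    HasSum (fun m : ℤ => ((q ^ n) ^ m * (v * q ^ k)) ^ 2 / (1 - (q ^ n) ^ m * (v * q ^ k)) ^ 3)
      ((∑' p : ℕ × ℕ, (((p.2 + 1 : ℕ) : ℂ) - 1) * ((p.2 + 1 : ℕ) : ℂ) / 2 * v ^ (p.2 + 1)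
          * q ^ (((p.1 + 1) * n + k) * (p.2 + 1)))
        + (v * q ^ k) ^ 2 / (1 - v * q ^ k) ^ 3
        - ∑' p : ℕ × ℕ, ((p.2 + 1 : ℕ) : ℂ) * (((p.2 + 1 : ℕ) : ℂ) + 1) / 2
            * v ^ (-((p.2 + 1 : ℕ) : ℤ)) * q ^ (((p.1 + 1) * n - k) * (p.2 + 1))) := by
  have hn : 0 < n := hk0.trans hkn
  have hc : ∀ l : ℕ, (l + 1).choose 2 ≤ (l + 1) ^ 2 := fun l => Nat.choose_le_pow _ _
  have hpos : (fun p : ℕ × ℕ =>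
      (((p.2 + 1 : ℕ) : ℂ) - 1) * ((p.2 + 1 : ℕ) : ℂ) / 2 * v ^ (p.2 + 1)
        * q ^ (((p.1 + 1) * n + k) * (p.2 + 1))) =
      fun p => ((p.2 + 1).choose 2 : ℂ) * (v * q ^ ((p.1 + 1) * n + k)) ^ (p.2 + 1) := by
    funext p; rw [Nat.cast_choose_two, mul_pow, ← pow_mul]; ring
  have hneg : (fun p : ℕ × ℕ =>
      ((p.2 + 1 : ℕ) : ℂ) * (((p.2 + 1 : ℕ) : ℂ) + 1) / 2 * v ^ (-((p.2 + 1 : ℕ) : ℤ))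
        * q ^ (((p.1 + 1) * n - k) * (p.2 + 1))) =
      fun p => ((p.2 + 2).choose 2 : ℂ) * (v⁻¹ * q ^ ((p.1 + 1) * n - k)) ^ (p.2 + 1) := by
    funext p
    rw [Nat.cast_choose_two, mul_pow, ← pow_mul, zpow_neg, zpow_natCast, inv_pow]
    push_cast
    ring
  rw [hpos, hneg]
  refine ⟨(summable_prod_mul_pow_succ 2 hc hq (norm_mul_pow_add_le hn hq hv) :),
    (summable_prod_mul_pow_succ 2 choose_two_add_two_le_sq hq
      (norm_inv_mul_pow_sub_le hkn hq hv) :), ?_⟩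
  have h := HasSum.of_add_one_of_neg_add_one
    (f := fun m : ℤ => ((q ^ n) ^ m * (v * q ^ k)) ^ 2 / (1 - (q ^ n) ^ m * (v * q ^ k)) ^ 3)
    (by
      simp only [zpow_natCast_add_one_mul]
      exact (hasSum_fiberwise_prod_mul_pow_succ 2 hc
        (fun _ => hasSum_choose_two_mul_pow_succ) hq (norm_mul_pow_add_le hn hq hv) :))
    (by
      simp only [zpow_neg_natCast_add_one_mul hk0 hkn, inv_sq_div_one_sub_inv_cube]
      exact (hasSum_fiberwise_prod_mul_pow_succ 2 choose_two_add_two_le_sq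
        (fun _ => hasSum_choose_two_add_two_mul_pow_succ) hq
        (norm_inv_mul_pow_sub_le hkn hq hv) :).neg)
  simpa [sub_eq_add_neg] using h

theorem hasSum_s1ser_pow (hn : 0 < n) (hq : ‖q‖ < 1) :
    HasSum (fun p : ℕ × ℕ => ((p.2 + 1 : ℕ) : ℂ) * q ^ ((p.1 + 1) * n * (p.2 + 1)))
      (s1ser (q ^ n)) := by
  refine (hasSum_s1ser (by rw [norm_pow]; exact pow_lt_one₀ (norm_nonneg _) hq hn.ne')).congr_fun
    fun p => ?_
  rw [← pow_mul, mul_right_comm, mul_comm n]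

end TateSeries

theorem Xtate_Ytate_qexpansion_kpos_general (n k : ℕ) (hk0 : 0 < k) (hkn : k < n) (q v : ℂ)
    (hq1 : ‖q‖ < 1) (hv : ‖v‖ = 1) :
    Summable (fun m : ℤ => (q ^ n) ^ m * (v * q ^ k) / (1 - (q ^ n) ^ m * (v * q ^ k)) ^ 2) ∧
    Summable (fun m : ℤ =>
      ((q ^ n) ^ m * (v * q ^ k)) ^ 2 / (1 - (q ^ n) ^ m * (v * q ^ k)) ^ 3) ∧
    Summable (fun l : ℕ => ((l + 1 : ℕ) : ℂ) * v ^ (l + 1) * q ^ (k * (l + 1))) ∧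
    Summable (fun p : ℕ × ℕ =>
      ((p.2 + 1 : ℕ) : ℂ) * v ^ (p.2 + 1) * q ^ (((p.1 + 1) * n + k) * (p.2 + 1))
        + ((p.2 + 1 : ℕ) : ℂ) * v ^ (-((p.2 + 1 : ℕ) : ℤ)) * q ^ (((p.1 + 1) * n - k) * (p.2 + 1))
        - 2 * ((p.2 + 1 : ℕ) : ℂ) * q ^ ((p.1 + 1) * n * (p.2 + 1))) ∧
    Summable (fun l : ℕ =>
      (((l + 2 : ℕ) : ℂ) - 1) * ((l + 2 : ℕ) : ℂ) / 2 * v ^ (l + 2) * q ^ (k * (l + 2))) ∧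
    Summable (fun p : ℕ × ℕ =>
      (((p.2 + 1 : ℕ) : ℂ) - 1) * ((p.2 + 1 : ℕ) : ℂ) / 2 * v ^ (p.2 + 1)
          * q ^ (((p.1 + 1) * n + k) * (p.2 + 1))
        - ((p.2 + 1 : ℕ) : ℂ) * (((p.2 + 1 : ℕ) : ℂ) + 1) / 2 * v ^ (-((p.2 + 1 : ℕ) : ℤ))
          * q ^ (((p.1 + 1) * n - k) * (p.2 + 1))
        + ((p.2 + 1 : ℕ) : ℂ) * q ^ ((p.1 + 1) * n * (p.2 + 1))) ∧
    Xtate (v * q ^ k) (q ^ n) =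
      (∑' l : ℕ, ((l + 1 : ℕ) : ℂ) * v ^ (l + 1) * q ^ (k * (l + 1))) +
      ∑' p : ℕ × ℕ,
        (((p.2 + 1 : ℕ) : ℂ) * v ^ (p.2 + 1) * q ^ (((p.1 + 1) * n + k) * (p.2 + 1))
          + ((p.2 + 1 : ℕ) : ℂ) * v ^ (-((p.2 + 1 : ℕ) : ℤ))
            * q ^ (((p.1 + 1) * n - k) * (p.2 + 1))
          - 2 * ((p.2 + 1 : ℕ) : ℂ) * q ^ ((p.1 + 1) * n * (p.2 + 1))) ∧
    Ytate (v * q ^ k) (q ^ n) =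
      (∑' l : ℕ,
        (((l + 2 : ℕ) : ℂ) - 1) * ((l + 2 : ℕ) : ℂ) / 2 * v ^ (l + 2) * q ^ (k * (l + 2))) +
      ∑' p : ℕ × ℕ,
        ((((p.2 + 1 : ℕ) : ℂ) - 1) * ((p.2 + 1 : ℕ) : ℂ) / 2 * v ^ (p.2 + 1)
            * q ^ (((p.1 + 1) * n + k) * (p.2 + 1))
          - ((p.2 + 1 : ℕ) : ℂ) * (((p.2 + 1 : ℕ) : ℂ) + 1) / 2 * v ^ (-((p.2 + 1 : ℕ) : ℤ))
            * q ^ (((p.1 + 1) * n - k) * (p.2 + 1))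
          + ((p.2 + 1 : ℕ) : ℂ) * q ^ ((p.1 + 1) * n * (p.2 + 1))) := by
  have hn : 0 < n := hk0.trans hkn
  obtain ⟨hXpos, hXneg, hX⟩ := Xtate_tsum_expansion hk0 hkn hq1 hv
  obtain ⟨hYpos, hYneg, hY⟩ := Ytate_tsum_expansion hk0 hkn hq1 hv
  have hX0 := hasSum_Xtate_term_zero hk0 hq1 hv
  have hY0 := hasSum_Ytate_term_zero hk0 hq1 hv
  have hC := hasSum_s1ser_pow hn hq1
  have hXpairs := (hXpos.hasSum.add hXneg.hasSum).sub (hC.mul_left 2)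
  simp only [← mul_assoc] at hXpairs
  have hYpairs := (hYpos.hasSum.sub hYneg.hasSum).add hC
  refine ⟨hX.summable, hY.summable, hX0.summable, hXpairs.summable, hY0.summable,
    hYpairs.summable, ?_, ?_⟩
  · rw [Xtate, hX.tsum_eq, hX0.tsum_eq, hXpairs.tsum_eq]
    ring
  · rw [Ytate, hY.tsum_eq, hY0.tsum_eq, hYpairs.tsum_eq]
    ring

/-- For `n ≥ 1`, `0 < k < n` and `q, v ∈ ℂ` with `0 < |q| < 1` and `|v| = 1`:
`X(vqᵏ,qⁿ) = Σ_{l≥1} l vˡ qᵏˡ + Σ_{m≥1} Σ_{l≥1} (l vˡ q⁽ᵐⁿ⁺ᵏ⁾ˡ + l v⁻ˡ q⁽ᵐⁿ⁻ᵏ⁾ˡ − 2l qᵐⁿˡ)` and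
`Y(vqᵏ,qⁿ) = Σ_{l≥2} ((l−1)l/2) vˡ qᵏˡ + Σ_{m≥1} Σ_{l≥1} (((l−1)l/2) vˡ q⁽ᵐⁿ⁺ᵏ⁾ˡ − (l(l+1)/2) v⁻ˡ q⁽ᵐⁿ⁻ᵏ⁾ˡ + l qᵐⁿˡ)`,
all series converging absolutely (the double series summed over pairs `(m,l)`). -/
theorem Xtate_Ytate_qexpansion_kpos (n k : ℕ) (hk0 : 0 < k) (hkn : k < n) (q v : ℂ)
    (hq0 : 0 < ‖q‖) (hq1 : ‖q‖ < 1) (hv : ‖v‖ = 1) :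
    Summable (fun m : ℤ => (q ^ n) ^ m * (v * q ^ k) / (1 - (q ^ n) ^ m * (v * q ^ k)) ^ 2) ∧
    Summable (fun m : ℤ =>
      ((q ^ n) ^ m * (v * q ^ k)) ^ 2 / (1 - (q ^ n) ^ m * (v * q ^ k)) ^ 3) ∧
    Summable (fun l : ℕ => ((l + 1 : ℕ) : ℂ) * v ^ (l + 1) * q ^ (k * (l + 1))) ∧
    Summable (fun p : ℕ × ℕ =>
      ((p.2 + 1 : ℕ) : ℂ) * v ^ (p.2 + 1) * q ^ (((p.1 + 1) * n + k) * (p.2 + 1))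
        + ((p.2 + 1 : ℕ) : ℂ) * v ^ (-((p.2 + 1 : ℕ) : ℤ)) * q ^ (((p.1 + 1) * n - k) * (p.2 + 1))
        - 2 * ((p.2 + 1 : ℕ) : ℂ) * q ^ ((p.1 + 1) * n * (p.2 + 1))) ∧
    Summable (fun l : ℕ =>
      (((l + 2 : ℕ) : ℂ) - 1) * ((l + 2 : ℕ) : ℂ) / 2 * v ^ (l + 2) * q ^ (k * (l + 2))) ∧
    Summable (fun p : ℕ × ℕ =>
      (((p.2 + 1 : ℕ) : ℂ) - 1) * ((p.2 + 1 : ℕ) : ℂ) / 2 * v ^ (p.2 + 1)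
          * q ^ (((p.1 + 1) * n + k) * (p.2 + 1))
        - ((p.2 + 1 : ℕ) : ℂ) * (((p.2 + 1 : ℕ) : ℂ) + 1) / 2 * v ^ (-((p.2 + 1 : ℕ) : ℤ))
          * q ^ (((p.1 + 1) * n - k) * (p.2 + 1))
        + ((p.2 + 1 : ℕ) : ℂ) * q ^ ((p.1 + 1) * n * (p.2 + 1))) ∧
    Xtate (v * q ^ k) (q ^ n) =
      (∑' l : ℕ, ((l + 1 : ℕ) : ℂ) * v ^ (l + 1) * q ^ (k * (l + 1))) +
      ∑' p : ℕ × ℕ,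
        (((p.2 + 1 : ℕ) : ℂ) * v ^ (p.2 + 1) * q ^ (((p.1 + 1) * n + k) * (p.2 + 1))
          + ((p.2 + 1 : ℕ) : ℂ) * v ^ (-((p.2 + 1 : ℕ) : ℤ))
            * q ^ (((p.1 + 1) * n - k) * (p.2 + 1))
          - 2 * ((p.2 + 1 : ℕ) : ℂ) * q ^ ((p.1 + 1) * n * (p.2 + 1))) ∧
    Ytate (v * q ^ k) (q ^ n) =
      (∑' l : ℕ,
        (((l + 2 : ℕ) : ℂ) - 1) * ((l + 2 : ℕ) : ℂ) / 2 * v ^ (l + 2) * q ^ (k * (l + 2))) +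
      ∑' p : ℕ × ℕ,
        ((((p.2 + 1 : ℕ) : ℂ) - 1) * ((p.2 + 1 : ℕ) : ℂ) / 2 * v ^ (p.2 + 1)
            * q ^ (((p.1 + 1) * n + k) * (p.2 + 1))
          - ((p.2 + 1 : ℕ) : ℂ) * (((p.2 + 1 : ℕ) : ℂ) + 1) / 2 * v ^ (-((p.2 + 1 : ℕ) : ℤ))
            * q ^ (((p.1 + 1) * n - k) * (p.2 + 1))
          + ((p.2 + 1 : ℕ) : ℂ) * q ^ ((p.1 + 1) * n * (p.2 + 1))) :=
  Xtate_Ytate_qexpansion_kpos_general n k hk0 hkn q v hq1 hv
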